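/- arXiv:1805.12190 — 3 statements merged into one kernel-verified Lean document; each statement's English description precedes it below -/
import Mathlib

section
/- Let H : ℝ → ℝ be nondecreasing with 0 ≤ H ≤ 1 and H(y) = 0 for y < 0, let c > 0, and suppose a* ∈ ℝ satisfies H(x) < 1/2 for all x < a* and H(x) > 1/2 for all x > a*. For a ∈ ℝ define V_a : ℝ → ℝ by V_a(x) = (2/c)·∫_x^a H(y) dy − (a − x)/c for x ≤ a and V_a(x) = 0 for x > a. Then for every x ∈ ℝ and every a ∈ ℝ, V_{a*}(x) ≤ V_a(x); that is, a ↦ V_a(x) attains its minimum at a = a*. -/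
open MeasureTheory intervalIntegral

/-- The candidate value function: `V_a(x) = (2/c)·∫_x^a H(y) dy − (a − x)/c` for `x ≤ a`,
and `V_a(x) = 0` for `x > a`. -/
noncomputable def valueFun (H : ℝ → ℝ) (c a x : ℝ) : ℝ :=
  if x ≤ a then (2 / c) * (∫ y in x..a, H y) - (a - x) / c else 0

/-!
On `x ≤ a` one has `V_a(x) = (2/c) ∫_x^a (H - 1/2)`, and for `a < x` the same formula holds with
the upper limit replaced by `max a x = x`. Since `H - 1/2` is nonpositive left of `a*` and
nonnegative right of it, `b ↦ ∫_x^b (H - 1/2)` decreases up to `a*` and increases afterwards, so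
over `b ≥ x` it is smallest at `b = max a* x`.
-/

lemma integral_nonneg_of_nonneg_Ioo {g : ℝ → ℝ} {u v : ℝ} (huv : u ≤ v)
    (hg : IntervalIntegrable g volume u v) (hpos : ∀ y ∈ Set.Ioo u v, 0 ≤ g y) :
    0 ≤ ∫ y in u..v, g y := by
  simpa using integral_mono_on_of_le_Ioo huv intervalIntegrable_const hg hpos

lemma integral_nonpos_of_nonpos_Ioo {g : ℝ → ℝ} {u v : ℝ} (huv : u ≤ v)
    (hg : IntervalIntegrable g volume u v) (hneg : ∀ y ∈ Set.Ioo u v, g y ≤ 0) :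
    ∫ y in u..v, g y ≤ 0 := by
  simpa using integral_mono_on_of_le_Ioo huv hg intervalIntegrable_const hneg

lemma integral_max_le_integral_of_sign_change {g : ℝ → ℝ}
    (hg : ∀ u v, IntervalIntegrable g volume u v) {m : ℝ}
    (hneg : ∀ y < m, g y ≤ 0) (hpos : ∀ y, m < y → 0 ≤ g y) {x b : ℝ} (hxb : x ≤ b) :
    ∫ y in x..max m x, g y ≤ ∫ y in x..b, g y := by
  suffices 0 ≤ ∫ y in max m x..b, g y by
    rwa [← integral_interval_sub_left (hg x b) (hg x _), sub_nonneg] at this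
  rcases le_or_gt (max m x) b with hb | hb
  · exact integral_nonneg_of_nonneg_Ioo hb (hg _ _) fun y hy =>
      hpos y ((le_max_left m x).trans_lt hy.1)
  · have hmb : max m x = m := max_eq_left (by by_contra! h; rw [max_eq_right h.le] at hb; linarith)
    rw [integral_symm, neg_nonneg]
    exact integral_nonpos_of_nonpos_Ioo hb.le (hg _ _) fun y hy => hneg y (hmb ▸ hy.2)

lemma valueFun_eq_integral_sub_half (H : ℝ → ℝ) (hH : ∀ u v, IntervalIntegrable H volume u v)
    (c a x : ℝ) : valueFun H c a x = 2 / c * ∫ y in x..max a x, (H y - 1 / 2) := by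
  unfold valueFun
  split_ifs with hxa
  · rw [max_eq_left hxa, integral_sub (hH x a) intervalIntegrable_const,
      intervalIntegral.integral_const, smul_eq_mul]
    ring
  · simp [max_eq_right (le_of_not_ge hxa)]

theorem valueFun_min_at_median_general (H : ℝ → ℝ) (hmono : Monotone H)
    (c : ℝ) (hc : 0 < c) (astar : ℝ)
    (hlt : ∀ x : ℝ, x < astar → H x < 1 / 2) (hgt : ∀ x : ℝ, astar < x → 1 / 2 < H x) :
    ∀ x a : ℝ, valueFun H c astar x ≤ valueFun H c a x := by
  intro x a
  have hH : ∀ u v, IntervalIntegrable H volume u v := fun _ _ => hmono.intervalIntegrable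
  rw [valueFun_eq_integral_sub_half H hH, valueFun_eq_integral_sub_half H hH]
  gcongr
  exact integral_max_le_integral_of_sign_change (fun u v => (hH u v).sub intervalIntegrable_const)
    (fun y hy => by linarith [hlt y hy]) (fun y hy => by linarith [hgt y hy]) (le_max_right a x)

/-- Let `H : ℝ → ℝ` be nondecreasing with `0 ≤ H ≤ 1`, vanishing on `(−∞,0)`, `c > 0`, and
suppose `a*` satisfies `H < 1/2` on `(−∞, a*)` and `H > 1/2` on `(a*, ∞)`. Then for every
`x` and every `a`, `V_{a*}(x) ≤ V_a(x)`: the map `a ↦ V_a(x)` is minimised at `a = a*`. -/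
theorem valueFun_min_at_median (H : ℝ → ℝ) (hmono : Monotone H)
    (h0 : ∀ y, 0 ≤ H y) (h1 : ∀ y, H y ≤ 1) (hneg : ∀ y : ℝ, y < 0 → H y = 0)
    (c : ℝ) (hc : 0 < c) (astar : ℝ)
    (hlt : ∀ x : ℝ, x < astar → H x < 1 / 2) (hgt : ∀ x : ℝ, astar < x → 1 / 2 < H x) :
    ∀ x a : ℝ, valueFun H c astar x ≤ valueFun H c a x :=
  valueFun_min_at_median_general H hmono c hc astar hlt hgt
end

section
/- Let H : ℝ → ℝ be nondecreasing with 0 ≤ H ≤ 1 and H(y) = 0 for y < 0, let c > 0, and let a* > 0 be such that H is continuous at a* with H(a*) = 1/2. Define V : ℝ → ℝ by V(x) = (2/c)·∫_x^{a*} H(y) dy − (a* − x)/c for x ≤ a* and V(x) = 0 for x > a*. Then V is differentiable at a* with V'(a*) = 0. -/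
open MeasureTheory intervalIntegral

/-- Smooth fit: let `H : ℝ → ℝ` be nondecreasing with `0 ≤ H ≤ 1`, vanishing on `(−∞,0)`,
`c > 0`, and let `a* > 0` be such that `H` is continuous at `a*` with `H(a*) = 1/2`. Define
`V(x) = (2/c)·∫_x^{a*} H(y) dy − (a* − x)/c` for `x ≤ a*` and `V(x) = 0` for `x > a*`. Then
`V` is differentiable at `a*` with `V'(a*) = 0`. -/
theorem smooth_fit_at_median (H : ℝ → ℝ) (hmono : Monotone H)
    (h0 : ∀ y, 0 ≤ H y) (h1 : ∀ y, H y ≤ 1) (hneg : ∀ y : ℝ, y < 0 → H y = 0)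
    (c : ℝ) (hc : 0 < c) (astar : ℝ) (hastar : 0 < astar)
    (hcont : ContinuousAt H astar) (hmed : H astar = 1 / 2) :
    HasDerivAt (fun x : ℝ =>
      if x ≤ astar then (2 / c) * (∫ y in x..astar, H y) - (astar - x) / c else 0) 0 astar := by
  have hInt : IntervalIntegrable H volume astar astar := hmono.intervalIntegrable
  have hmeas : StronglyMeasurableAtFilter H (nhds astar) :=
    hmono.measurable.stronglyMeasurable.stronglyMeasurableAtFilter
  have h1' : HasDerivAt (fun u : ℝ => ∫ y in u..astar, H y) (-H astar) astar :=
    integral_hasDerivAt_left hInt hmeas hcont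
  have hg : HasDerivAt (fun x : ℝ => (2 / c) * (∫ y in x..astar, H y) - (astar - x) / c)
      0 astar := by
    have h2 := (h1'.const_mul (2 / c)).sub (((hasDerivAt_id astar).const_sub astar).div_const c)
    convert h2 using 1
    · rfl
    · rfl
    · rfl
    rw [hmed]
    field_simp
    ring
  have hleft : HasDerivWithinAt (fun x : ℝ =>
      if x ≤ astar then (2 / c) * (∫ y in x..astar, H y) - (astar - x) / c else 0)
      0 (Set.Iic astar) astar := by
    refine hg.hasDerivWithinAt.congr (fun x hx => ?_) ?_
    · simp [Set.mem_Iic.mp hx]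
    · simp
  have hright : HasDerivWithinAt (fun x : ℝ =>
      if x ≤ astar then (2 / c) * (∫ y in x..astar, H y) - (astar - x) / c else 0)
      0 (Set.Ici astar) astar := by
    refine (hasDerivWithinAt_const astar (Set.Ici astar) (0 : ℝ)).congr (fun x hx => ?_) ?_
    · rcases eq_or_lt_of_le (Set.mem_Ici.mp hx) with h | h
      · simp [← h, intervalIntegral.integral_same]
      · simp [not_le.mpr h]
    · simp
  have := hleft.union hright
  rw [Set.Iic_union_Ici, hasDerivWithinAt_univ] at this
  exact this
end

section
/- Let μ be a Borel probability measure on ℝ with μ([0,∞)) = 1, with cumulative distribution function F(x) = μ((−∞, x]), and let H(x) = (μ ∗ μ)((−∞, x]) be the cumulative distribution function of the convolution μ ∗ μ. Then for every a ≥ 0, ∫₀^a H(y) dy = ∫₀^a F(y)·F(a − y) dy. -/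
/-!
Both sides are `∫ G(a - x) dμ(x)` with `G(t) = ∫₀^t F`. On the left, `H(y) = ∫ F(y - x) dμ(x)`
and Fubini give `∫ (∫₀^a F(y - x) dy) dμ(x)`, and the inner integral is `G(a - x)` because `F`
vanishes on the negative half-line. On the right, `F(a - y) = μ{x : y ≤ a - x}`, so Fubini gives
`∫ (∫₀^a 1{y ≤ a - x} F(y) dy) dμ(x)`, whose inner integral is again `G(a - x)`.
-/

open MeasureTheory ProbabilityTheory Set

namespace ProbabilityTheory

lemma norm_cdf_le_one (μ : Measure ℝ) (x : ℝ) : ‖cdf μ x‖ ≤ 1 := by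
  rw [Real.norm_of_nonneg (cdf_nonneg μ x)]
  exact cdf_le_one μ x

lemma integrable_uIoc_prod_of_norm_le_one {α : Type*} [MeasurableSpace α] (ρ : Measure α)
    [IsFiniteMeasure ρ] {f : ℝ × α → ℝ} (hf : Measurable f) (hf_le : ∀ p, ‖f p‖ ≤ 1) (a b : ℝ) :
    Integrable f ((volume.restrict (uIoc a b)).prod ρ) :=
  have : IsFiniteMeasure (volume.restrict (uIoc a b)) :=
    isFiniteMeasure_restrict.2 measure_Ioc_lt_top.ne
  Integrable.of_bound hf.aestronglyMeasurable 1 (ae_of_all _ hf_le)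

lemma cdf_conv_eq_integral_cdf (μ ν : Measure ℝ) [IsProbabilityMeasure μ] [IsProbabilityMeasure ν]
    (y : ℝ) : cdf (μ ∗ ν) y = ∫ x, cdf ν (y - x) ∂μ := by
  have hint : Integrable ((Iic y).indicator (1 : ℝ → ℝ)) (μ ∗ ν) :=
    (integrable_const (1 : ℝ)).indicator measurableSet_Iic
  rw [cdf_eq_real, ← integral_indicator_one measurableSet_Iic, integral_conv hint]
  refine integral_congr_ae (ae_of_all _ fun x => ?_)
  have hpre : (fun z => (Iic y).indicator (1 : ℝ → ℝ) (x + z)) = (Iic (y - x)).indicator 1 := by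
    ext z
    simp only [indicator_apply, mem_Iic, le_sub_iff_add_le', Pi.one_apply]
  simp only [hpre, integral_indicator_one measurableSet_Iic, cdf_eq_real]

lemma cdf_mul_cdf_sub_eq_integral (μ ν : Measure ℝ) [IsProbabilityMeasure μ] (a y : ℝ) :
    cdf ν y * cdf μ (a - y) = ∫ x, (Iic (a - x)).indicator (cdf ν) y ∂μ := by
  have hswap : (fun x => (Iic (a - x)).indicator (cdf ν) y)
      = (Iic (a - y)).indicator fun _ => cdf ν y := by
    ext x
    simp only [indicator_apply, mem_Iic, le_sub_comm]
  rw [hswap, integral_indicator_const _ measurableSet_Iic, ← cdf_eq_real, smul_eq_mul, mul_comm]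

lemma integral_cdf_conv_eq_integral_integral (μ ν : Measure ℝ) [IsProbabilityMeasure μ]
    [IsProbabilityMeasure ν] (a : ℝ) :
    ∫ y in 0..a, cdf (μ ∗ ν) y = ∫ x, (∫ y in 0..a, cdf ν (y - x)) ∂μ := by
  simp_rw [cdf_conv_eq_integral_cdf μ ν]
  refine intervalIntegral_integral_swap (integrable_uIoc_prod_of_norm_le_one μ ?_ (fun p => ?_) 0 a)
  · exact (monotone_cdf ν).measurable.comp (measurable_fst.sub measurable_snd)
  · exact norm_cdf_le_one ν _

lemma integral_cdf_mul_cdf_sub_eq_integral_integral (μ ν : Measure ℝ) [IsProbabilityMeasure μ]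
    (a : ℝ) :
    ∫ y in 0..a, cdf ν y * cdf μ (a - y)
      = ∫ x, (∫ y in 0..a, (Iic (a - x)).indicator (cdf ν) y) ∂μ := by
  simp_rw [cdf_mul_cdf_sub_eq_integral μ ν]
  refine intervalIntegral_integral_swap (integrable_uIoc_prod_of_norm_le_one μ ?_ (fun p => ?_) 0 a)
  · exact (monotone_cdf ν).measurable.comp measurable_fst |>.ite
      (measurableSet_le measurable_fst (measurable_const.sub measurable_snd)) measurable_const
  · exact (norm_indicator_le_norm_self _ _).trans (norm_cdf_le_one ν _)

lemma intervalIntegral_indicator_Iic_eq_zero {E : Type*} [NormedAddCommGroup E] [NormedSpace ℝ E]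
    (f : ℝ → E) {b c : ℝ} (hcb : c ≤ b) : ∫ y in c..b, (Iic c).indicator f y = 0 := by
  rw [intervalIntegral.integral_of_le hcb]
  exact setIntegral_eq_zero_of_forall_eq_zero fun y hy =>
    indicator_of_notMem (notMem_Iic.2 hy.1) f

section Nonneg

variable {ν : Measure ℝ} [IsProbabilityMeasure ν]

lemma cdf_eq_zero_of_neg (hν : ν (Iio 0) = 0) {x : ℝ} (hx : x < 0) : cdf ν x = 0 := by
  rw [cdf_eq_real, measureReal_def, measure_mono_null (Iic_subset_Iio.2 hx) hν,
    ENNReal.toReal_zero]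

lemma integral_cdf_eq_zero_of_nonpos (hν : ν (Iio 0) = 0) {t : ℝ} (ht : t ≤ 0) :
    ∫ u in t..0, cdf ν u = 0 := by
  rw [intervalIntegral.integral_of_le ht, integral_Ioc_eq_integral_Ioo]
  exact setIntegral_eq_zero_of_forall_eq_zero fun u hu => cdf_eq_zero_of_neg hν hu.2

lemma integral_cdf_comp_sub (hν : ν (Iio 0) = 0) {x : ℝ} (hx : 0 ≤ x) (a : ℝ) :
    ∫ y in 0..a, cdf ν (y - x) = ∫ u in 0..a - x, cdf ν u := by
  have hint (b c : ℝ) : IntervalIntegrable (cdf ν) volume b c :=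
    (monotone_cdf ν).intervalIntegrable
  rw [intervalIntegral.integral_comp_sub_right (fun u => cdf ν u) x, zero_sub,
    ← intervalIntegral.integral_add_adjacent_intervals (hint (-x) 0) (hint 0 (a - x)),
    integral_cdf_eq_zero_of_nonpos hν (neg_nonpos.2 hx), zero_add]

lemma integral_indicator_Iic_cdf (hν : ν (Iio 0) = 0) {a c : ℝ} (hca : c ≤ a) :
    ∫ y in 0..a, (Iic c).indicator (cdf ν) y = ∫ u in 0..c, cdf ν u := by
  have hint (b d : ℝ) : IntervalIntegrable ((Iic c).indicator (cdf ν)) volume b d :=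
    (monotone_cdf ν).intervalIntegrable.mono_fun
      ((monotone_cdf ν).measurable.indicator measurableSet_Iic).aestronglyMeasurable
      (ae_of_all _ fun y => norm_indicator_le_norm_self _ _)
  rw [← intervalIntegral.integral_add_adjacent_intervals (hint 0 c) (hint c a),
    intervalIntegral_indicator_Iic_eq_zero _ hca, add_zero]
  rcases le_or_gt 0 c with hc | hc
  · refine intervalIntegral.integral_congr fun y hy => indicator_of_mem ?_ _
    exact (uIcc_of_le hc ▸ hy).2
  · rw [intervalIntegral.integral_symm, intervalIntegral_indicator_Iic_eq_zero _ hc.le,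
      intervalIntegral.integral_symm, integral_cdf_eq_zero_of_nonpos hν hc.le, neg_zero]

end Nonneg

theorem integral_cdf_conv_eq_integral_cdf_mul_cdf_sub {μ ν : Measure ℝ} [IsProbabilityMeasure μ]
    [IsProbabilityMeasure ν] (hμ : μ (Iio 0) = 0) (hν : ν (Iio 0) = 0) (a : ℝ) :
    ∫ y in 0..a, cdf (μ ∗ ν) y = ∫ y in 0..a, cdf ν y * cdf μ (a - y) := by
  rw [integral_cdf_conv_eq_integral_integral μ ν, integral_cdf_mul_cdf_sub_eq_integral_integral μ ν]
  refine integral_congr_ae ?_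
  have hμ_ae : ∀ᵐ x ∂μ, 0 ≤ x := ae_iff.2 (by simp only [not_le]; exact hμ)
  filter_upwards [hμ_ae] with x hx
  rw [integral_cdf_comp_sub hν hx, integral_indicator_Iic_cdf hν (sub_le_self a hx)]

end ProbabilityTheory

theorem integral_conv_cdf_eq_general (μ : Measure ℝ) [IsProbabilityMeasure μ]
    (hμ : μ (Set.Ici (0:ℝ)) = 1)
    (F H : ℝ → ℝ) (hF : ∀ x, F x = (μ (Set.Iic x)).toReal)
    (hH : ∀ x, H x = ((Measure.conv μ μ) (Set.Iic x)).toReal)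
    (a : ℝ) :
    ∫ y in (0:ℝ)..a, H y = ∫ y in (0:ℝ)..a, F y * F (a - y) := by
  obtain rfl : F = cdf μ := funext fun x => by rw [hF, cdf_eq_real, measureReal_def]
  obtain rfl : H = cdf (μ ∗ μ) := funext fun x => by rw [hH, cdf_eq_real, measureReal_def]
  have hμ_neg : μ (Iio 0) = 0 := by
    rw [← compl_Ici]
    exact (prob_compl_eq_zero_iff measurableSet_Ici).2 hμ
  exact integral_cdf_conv_eq_integral_cdf_mul_cdf_sub hμ_neg hμ_neg a

/-- If `μ` is a Borel probability measure on `ℝ` carried by `[0,∞)`, `F` its CDF and `H` the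
CDF of `μ ∗ μ`, then for every `a ≥ 0`, `∫₀^a H(y) dy = ∫₀^a F(y)·F(a − y) dy`. -/
theorem integral_conv_cdf_eq (μ : Measure ℝ) [IsProbabilityMeasure μ]
    (hμ : μ (Set.Ici (0:ℝ)) = 1)
    (F H : ℝ → ℝ) (hF : ∀ x, F x = (μ (Set.Iic x)).toReal)
    (hH : ∀ x, H x = ((Measure.conv μ μ) (Set.Iic x)).toReal)
    (a : ℝ) (ha : 0 ≤ a) :
    ∫ y in (0:ℝ)..a, H y = ∫ y in (0:ℝ)..a, F y * F (a - y) :=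
  integral_conv_cdf_eq_general μ hμ F H hF hH a
end
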